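/- Let q be a prime power, n ≥ 2, 1 ≤ m < n, and let K be a field containing 𝔽_q (i.e., equipped with a ring homomorphism 𝔽_q → K). If x ∈ SL_n(K) is block diagonal of the form fromBlocks(A, 0, 0, D) and x commutes with every matrix fromBlocks(1_m, B, 0, 1_{n−m}) where B ranges over the m×(n−m) matrices with entries in 𝔽_q, then x is a scalar matrix (an element of the center of SL_n(K)). (This is the Levi-centralizer lemma for a parabolic with abelian unipotent radical, in its type A_{n-1} instance.) -/

import Mathlib

open Matrix

namespace Matrix

variable {m n α : Type*} [Fintype m] [Fintype n] [DecidableEq m] [DecidableEq n] [Semiring α]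

theorem fromBlocks_diagonal_commute_fromBlocks_unipotent_iff
    (A : Matrix m m α) (D : Matrix n n α) (B : Matrix m n α) :
    fromBlocks A 0 0 D * fromBlocks 1 B 0 1 = fromBlocks 1 B 0 1 * fromBlocks A 0 0 D ↔
      A * B = B * D := by
  simp [fromBlocks_multiply]

/-- Comparing column `j` of `A * E i j = E i j * D` gives `A k i = δ k i * D j j`, and comparing
row `i` gives `D j l = δ j l * A i i`. -/
theorem exists_eq_smul_one_of_mul_single_eq_single_mul [Nonempty m] [Nonempty n]
    {A : Matrix m m α} {D : Matrix n n α}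
    (h : ∀ (i : m) (j : n), A * single i j (1 : α) = single i j (1 : α) * D) :
    ∃ c : α, A = c • 1 ∧ D = c • 1 := by
  obtain ⟨i₀⟩ := ‹Nonempty m›
  obtain ⟨j₀⟩ := ‹Nonempty n›
  have hA : ∀ k i, A k i = if k = i then D j₀ j₀ else 0 := fun k i => by
    by_cases hki : k = i <;> simpa [hki] using congr_fun₂ (h i j₀) k j₀
  have hD : ∀ j l, D j l = if j = l then A i₀ i₀ else 0 := fun j l => by
    by_cases hjl : j = l <;> simpa [hjl, eq_comm] using congr_fun₂ (h i₀ j) i₀ l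
  refine ⟨D j₀ j₀, ext fun k i => ?_, ext fun j l => ?_⟩
  · simp [hA, one_apply]
  · simp [hD j l, hA i₀ i₀, one_apply]

end Matrix

theorem centralizer_of_unipotent_radical_is_central
    (a b : ℕ)
    (Fq : Type) [Field Fq]
    (ha : 1 ≤ a) (hb : 1 ≤ b)
    (K : Type) [Field K] (f : Fq →+* K)
    (x : SpecialLinearGroup (Fin a ⊕ Fin b) K)
    (A : Matrix (Fin a) (Fin a) K) (D : Matrix (Fin b) (Fin b) K)
    (hxAD : (x : Matrix (Fin a ⊕ Fin b) (Fin a ⊕ Fin b) K) = Matrix.fromBlocks A 0 0 D)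
    (hcomm : ∀ B : Matrix (Fin a) (Fin b) Fq,
      (x : Matrix (Fin a ⊕ Fin b) (Fin a ⊕ Fin b) K) * Matrix.fromBlocks 1 (B.map f) 0 1 =
        Matrix.fromBlocks 1 (B.map f) 0 1 * (x : Matrix (Fin a ⊕ Fin b) (Fin a ⊕ Fin b) K)) :
    ∃ c : K, (x : Matrix (Fin a ⊕ Fin b) (Fin a ⊕ Fin b) K) =
      c • (1 : Matrix (Fin a ⊕ Fin b) (Fin a ⊕ Fin b) K) := by
  have : Nonempty (Fin a) := ⟨⟨0, ha⟩⟩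
  have : Nonempty (Fin b) := ⟨⟨0, hb⟩⟩
  have hAD : ∀ (i : Fin a) (j : Fin b), A * single i j (1 : K) = single i j (1 : K) * D :=
    fun i j => by
      simpa [hxAD, map_single, fromBlocks_diagonal_commute_fromBlocks_unipotent_iff]
        using hcomm (single i j 1)
  obtain ⟨c, rfl, rfl⟩ := exists_eq_smul_one_of_mul_single_eq_single_mul hAD
  exact ⟨c, by rw [hxAD, ← fromBlocks_one, fromBlocks_smul, smul_zero, smul_zero]⟩
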